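/- arXiv:1804.04933 — 6 statements merged into one kernel-verified Lean document; each statement's English description precedes it below -/
import Mathlib

section
/- Let A ∈ ℝ^{n×n}, B ∈ ℝ^{n×m}, K ∈ ℝ^{m×n}, L ∈ ℝ^{n×p}, M ∈ ℝ^{p×n}, A_z ∈ ℝ^{p×p}. Let G = [[A, L], [M, A_z]] ∈ ℝ^{(n+p)×(n+p)} be the system matrix of the pre-existing (uncontrolled) interconnection, and let 𝓜 = [[A + B·K, L, −B·K], [M, A_z, 0], [0, L, A]] ∈ ℝ^{(n+p+n)×(n+p+n)} be the closed-loop matrix obtained by attaching the retrofit controller (with internal model state x̂ obeying x̂' = A x̂ + L z and control u = K(x − x̂)) to the subsystem x' = A x + B u + L z, z' = M x + A_z z. Then the characteristic polynomial of 𝓜 equals the product of the characteristic polynomial of G and the characteristic polynomial of A + B·K. -/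
/-!
The subspace `x̂ = x` is invariant under the closed loop, and on it the loop acts as `G`: once the
internal model tracks the plant the controller is idle. On the quotient the error `x - x̂` evolves
by `A + B·K`. Block-triangularising along this invariant subspace splits the characteristic
polynomial.
-/

open Matrix

-- `hE` says that the graph of `E` is invariant; conjugating by the shear `[[1, 0], [-E, 1]]`
-- then makes the matrix block upper triangular.
theorem Matrix.charpoly_fromBlocks_eq_mul_of_riccati {l m R : Type*} [Fintype l] [Fintype m]
    [DecidableEq l] [DecidableEq m] [CommRing R]
    (A : Matrix l l R) (B : Matrix l m R) (C : Matrix m l R) (D : Matrix m m R)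
    (E : Matrix m l R) (hE : C + D * E = E * (A + B * E)) :
    (fromBlocks A B C D).charpoly = (A + B * E).charpoly * (D - E * B).charpoly := by
  let U : (Matrix (l ⊕ m) (l ⊕ m) R)ˣ :=
    ⟨fromBlocks 1 0 (-E) 1, fromBlocks 1 0 E 1, by simp [fromBlocks_multiply],
      by simp [fromBlocks_multiply]⟩
  have hconj : U.val * fromBlocks A B C D * U⁻¹.val = fromBlocks (A + B * E) B 0 (D - E * B) := by
    simp only [U, Units.inv_mk, fromBlocks_multiply, Matrix.one_mul, Matrix.mul_one,
      Matrix.zero_mul, Matrix.mul_zero, Matrix.neg_mul, add_zero, zero_add]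
    congr 1
    · rw [Matrix.add_mul, Matrix.neg_mul, Matrix.mul_assoc, ← sub_eq_zero.mpr hE, Matrix.mul_add]
      abel
    · exact neg_add_eq_sub _ _
  rw [← charpoly_units_conj U, ← coe_units_inv, hconj, charpoly_fromBlocks_zero₂₁]

/-- The characteristic polynomial of the retrofit closed-loop matrix
`𝓜 = [[A + B·K, L, −B·K], [M, A_z, 0], [0, L, A]]` equals the product of the
characteristic polynomial of the pre-existing system matrix `G = [[A, L], [M, A_z]]`
and the characteristic polynomial of `A + B·K`. -/
theorem retrofit_charpoly_mul {n m p : ℕ}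
    (A : Matrix (Fin n) (Fin n) ℝ) (B : Matrix (Fin n) (Fin m) ℝ)
    (K : Matrix (Fin m) (Fin n) ℝ) (L : Matrix (Fin n) (Fin p) ℝ)
    (M : Matrix (Fin p) (Fin n) ℝ) (Az : Matrix (Fin p) (Fin p) ℝ) :
    (Matrix.fromBlocks
        (Matrix.fromBlocks (A + B * K) L M Az)
        (Matrix.fromRows (-(B * K)) (0 : Matrix (Fin p) (Fin n) ℝ))
        (Matrix.fromCols (0 : Matrix (Fin n) (Fin n) ℝ) L)
        A).charpoly
      = (Matrix.fromBlocks A L M Az).charpoly * (A + B * K).charpoly := by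
  let E : Matrix (Fin n) (Fin n ⊕ Fin p) ℝ := fromCols 1 0
  let Q : Matrix (Fin n ⊕ Fin p) (Fin n) ℝ := fromRows (-(B * K)) 0
  have hG : fromBlocks (A + B * K) L M Az + Q * E = fromBlocks A L M Az := by
    rw [fromRows_mul_fromCols, fromBlocks_add]
    simp
  have hABK : A - E * Q = A + B * K := by
    rw [fromCols_mul_fromRows]
    simp
  have hE : fromCols 0 L + A * E = E * fromBlocks A L M Az := by
    rw [mul_fromCols, fromCols_mul_fromBlocks]
    ext i (j | j) <;> simp
  rw [charpoly_fromBlocks_eq_mul_of_riccati _ _ _ _ E (by rwa [hG]), hG, hABK]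
end

section
/- Let A ∈ ℝ^{n×n}, B ∈ ℝ^{n×m}, K ∈ ℝ^{m×n}, L ∈ ℝ^{n×p}, M ∈ ℝ^{p×n}, A_z ∈ ℝ^{p×p}. Suppose the pre-existing system matrix G = [[A, L], [M, A_z]] is Hurwitz and A + B·K is Hurwitz. Then the retrofit closed-loop matrix 𝓜 = [[A + B·K, L, −B·K], [M, A_z, 0], [0, L, A]] is Hurwitz. -/
/-!
Pass to the coordinates `(x̂, z, e)` with `e = x - x̂` the estimation error. The error obeys
`e' = (A + B K) e` on its own, while `(x̂, z)` is driven by the pre-existing dynamics `G` plus the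
input `M e`. So the closed-loop matrix is similar to a block upper triangular matrix with
diagonal blocks `G` and `A + B K`, and its characteristic polynomial is the product of theirs.
-/

open Matrix Polynomial

/-- A real square matrix is Hurwitz if every eigenvalue of it, regarded as a matrix
over `ℂ`, has strictly negative real part. -/
def IsHurwitz {ι : Type*} [Fintype ι] [DecidableEq ι] (M : Matrix ι ι ℝ) : Prop :=
  ∀ z : ℂ, (M.map (fun x => (x : ℂ))).charpoly.IsRoot z → z.re < 0

theorem isHurwitz_iff_charpoly {ι : Type*} [Fintype ι] [DecidableEq ι] (M : Matrix ι ι ℝ) :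
    IsHurwitz M ↔ ∀ z : ℂ, (M.charpoly.map (algebraMap ℝ ℂ)).IsRoot z → z.re < 0 := by
  rw [← charpoly_map]
  rfl

theorem IsHurwitz.of_charpoly_eq_mul {ι κ ν : Type*} [Fintype ι] [DecidableEq ι] [Fintype κ]
    [DecidableEq κ] [Fintype ν] [DecidableEq ν] {N : Matrix ν ν ℝ} {P : Matrix ι ι ℝ}
    {Q : Matrix κ κ ℝ} (h : N.charpoly = P.charpoly * Q.charpoly) (hP : IsHurwitz P)
    (hQ : IsHurwitz Q) : IsHurwitz N := by
  rw [isHurwitz_iff_charpoly] at hP hQ ⊢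
  intro z hz
  rw [h, Polynomial.map_mul, root_mul] at hz
  exact hz.elim (hP z) (hQ z)

namespace Retrofit

variable {R ι κ : Type*} [CommRing R] [Fintype ι] [DecidableEq ι] [Fintype κ] [DecidableEq κ]

variable (R ι κ) in
/-- The change of coordinates `((x, z), x̂) ↦ ((x̂, z), x - x̂)`. -/
def toErrorCoords : Matrix ((ι ⊕ κ) ⊕ ι) ((ι ⊕ κ) ⊕ ι) R :=
  fromBlocks (fromBlocks 0 0 0 1) (fromRows 1 0) (fromCols 1 0) (-1)

variable (R ι κ) in
def ofErrorCoords : Matrix ((ι ⊕ κ) ⊕ ι) ((ι ⊕ κ) ⊕ ι) R :=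
  fromBlocks 1 (fromRows 1 0) (fromCols 1 0) 0

theorem toErrorCoords_mul_ofErrorCoords :
    toErrorCoords R ι κ * ofErrorCoords R ι κ = 1 := by
  ext (⟨i | i⟩ | i) (⟨j | j⟩ | j) <;>
    simp [toErrorCoords, ofErrorCoords, mul_apply, Fintype.sum_sum_type, one_apply]

theorem closedLoop_eq_ofErrorCoords_mul (A F : Matrix ι ι R) (L : Matrix ι κ R)
    (M : Matrix κ ι R) (Az : Matrix κ κ R) :
    fromBlocks (fromBlocks (A + F) L M Az) (fromRows (-F) 0) (fromCols 0 L) A =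
      ofErrorCoords R ι κ * fromBlocks (fromBlocks A L M Az) (fromRows 0 M) 0 (A + F) *
        toErrorCoords R ι κ := by
  ext (⟨i | i⟩ | i) (⟨j | j⟩ | j) <;>
    simp [toErrorCoords, ofErrorCoords, mul_apply, Fintype.sum_sum_type, one_apply]

theorem charpoly_closedLoop (A F : Matrix ι ι R) (L : Matrix ι κ R) (M : Matrix κ ι R)
    (Az : Matrix κ κ R) :
    (fromBlocks (fromBlocks (A + F) L M Az) (fromRows (-F) 0) (fromCols 0 L) A).charpoly =
      (fromBlocks A L M Az).charpoly * (A + F).charpoly := by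
  rw [closedLoop_eq_ofErrorCoords_mul, charpoly_mul_comm, ← Matrix.mul_assoc,
    toErrorCoords_mul_ofErrorCoords, Matrix.one_mul, charpoly_fromBlocks_zero₂₁]

end Retrofit

/-- If the pre-existing system matrix `G = [[A, L], [M, A_z]]` is Hurwitz and `A + B·K`
is Hurwitz, then the retrofit closed-loop matrix
`𝓜 = [[A + B·K, L, −B·K], [M, A_z, 0], [0, L, A]]` is Hurwitz. -/
theorem retrofit_hurwitz {n m p : ℕ}
    (A : Matrix (Fin n) (Fin n) ℝ) (B : Matrix (Fin n) (Fin m) ℝ)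
    (K : Matrix (Fin m) (Fin n) ℝ) (L : Matrix (Fin n) (Fin p) ℝ)
    (M : Matrix (Fin p) (Fin n) ℝ) (Az : Matrix (Fin p) (Fin p) ℝ)
    (hG : IsHurwitz (Matrix.fromBlocks A L M Az))
    (hK : IsHurwitz (A + B * K)) :
    IsHurwitz (Matrix.fromBlocks
        (Matrix.fromBlocks (A + B * K) L M Az)
        (Matrix.fromRows (-(B * K)) (0 : Matrix (Fin p) (Fin n) ℝ))
        (Matrix.fromCols (0 : Matrix (Fin n) (Fin n) ℝ) L)
        A) :=
  IsHurwitz.of_charpoly_eq_mul (Retrofit.charpoly_closedLoop A (B * K) L M Az) hG hK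
end

section
/- Let A ∈ ℝ^{n×n}, B ∈ ℝ^{n×m}, K ∈ ℝ^{m×n}, and let f̃ : ℝ → ℝ^n be any function. Suppose x, x̂ : ℝ → ℝ^n are differentiable and satisfy, for all t, x'(t) = A·x(t) + B·u(t) + f̃(t) and x̂'(t) = A·x̂(t) + f̃(t), where u(t) = K·(x(t) − x̂(t)). If x̂(0) = x(0), then x̂(t) = x(t) and u(t) = 0 for all t. -/
open Matrix

/-! The tracking error `e = x - x̂` obeys the closed-loop linear ODE `e' = (A + B K) e`, in which
the coupling term `f̃` cancels. Since `e(0) = 0` and `0` solves the same ODE, uniqueness of solutions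
of Lipschitz ODEs gives `e ≡ 0`, hence `x̂ ≡ x` and `u = K e ≡ 0`. -/

theorem eq_zero_of_forall_hasDerivAt_clm_apply {E : Type*} [NormedAddCommGroup E]
    [NormedSpace ℝ E] (L : E →L[ℝ] E) {e : ℝ → E} (he : ∀ t, HasDerivAt e (L (e t)) t)
    {t₀ : ℝ} (he₀ : e t₀ = 0) : e = 0 :=
  ODE_solution_unique_univ (v := fun _ => L) (s := fun _ => Set.univ)
    (fun _ => L.lipschitz.lipschitzOnWith) (fun t => ⟨he t, trivial⟩)
    (fun t => ⟨hasDerivAt_const t 0 |>.congr_deriv (map_zero L).symm, trivial⟩) he₀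

/-- Plug-and-play inactivity of the retrofit controller: if `x' = A x + B u + f̃` and
`x̂' = A x̂ + f̃` with `u = K (x − x̂)` and `x̂(0) = x(0)`, then `x̂ ≡ x` and `u ≡ 0`. -/
theorem retrofit_inactive_of_matched_init {n m : ℕ}
    (A : Matrix (Fin n) (Fin n) ℝ) (B : Matrix (Fin n) (Fin m) ℝ)
    (K : Matrix (Fin m) (Fin n) ℝ) (f : ℝ → (Fin n → ℝ))
    (x xh : ℝ → (Fin n → ℝ)) (u : ℝ → (Fin m → ℝ))
    (hx : Differentiable ℝ x) (hxh : Differentiable ℝ xh)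
    (hu : ∀ t, u t = K.mulVec (x t - xh t))
    (hdx : ∀ t, deriv x t = A.mulVec (x t) + B.mulVec (u t) + f t)
    (hdxh : ∀ t, deriv xh t = A.mulVec (xh t) + f t)
    (h0 : xh 0 = x 0) :
    ∀ t, xh t = x t ∧ u t = 0 := by
  let closedLoop := LinearMap.toContinuousLinearMap (A + B * K).mulVecLin
  have herror : ∀ t, HasDerivAt (x - xh) (closedLoop ((x - xh) t)) t := by
    intro t
    refine ((hx t).hasDerivAt.sub (hxh t).hasDerivAt).congr_deriv ?_
    simp only [closedLoop, LinearMap.coe_toContinuousLinearMap', mulVecLin_apply, Pi.sub_apply,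
      hdx, hdxh, hu, add_mulVec, mulVec_sub, ← mulVec_mulVec]
    abel
  have herror_zero := eq_zero_of_forall_hasDerivAt_clm_apply closedLoop herror
    (sub_eq_zero.mpr h0.symm)
  intro t
  have hxt : xh t = x t := (sub_eq_zero.mp (congrFun herror_zero t)).symm
  exact ⟨hxt, by rw [hu, hxt, sub_self, mulVec_zero]⟩
end

section
/- Let X_d > 0, X_d' > 0, X_q > 0, V > 0, θ ∈ ℝ, and real P*, Q* with Q* + V²/X_q > 0. Define δ* := θ + arctan(P*/(Q* + V²/X_q)), E* := (V⁴ + Q*²·X_d'·X_q + Q*·V²·X_d' + Q*·V²·X_q + P*²·X_d'·X_q) / (V·√(P*²·X_q² + Q*²·X_q² + 2·Q*·V²·X_q + V⁴)), and V_fd* := (X_d/X_d')·E* − (X_d/X_d' − 1)·V·cos(δ* − θ). Then: (i) P* = (E*·V/X_d')·sin(δ* − θ) − (V²/2)·(1/X_d' − 1/X_q)·sin(2(δ* − θ)); (ii) Q* = (E*·V/X_d')·cos(δ* − θ) − V²·(sin²(δ* − θ)/X_q + cos²(δ* − θ)/X_d'); and (iii) 0 = −(X_d/X_d')·E* + (X_d/X_d'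 − 1)·V·cos(δ* − θ) + V_fd*. -/
open Real

/-!
Put `φ = δ* − θ`, `A = Q* + V²/X_q` and `W = √(A² + P*²)`, so that `(W, φ)` are polar coordinates
of `(A, P*)`. Using `sin² φ + cos² φ = 1`, equations (i) and (ii) say exactly that
`(P*, A) = k (sin φ, cos φ)` with `k = E* V / X_d' − V² (1/X_d' − 1/X_q) cos φ`, and the formula
for `E*` is the one that makes `k = W`. Equation (iii) is the definition of `V_fd*`.
-/

lemma mul_sin_sub_mul_sin_two_mul (a v d φ : ℝ) :
    a * sin φ - v / 2 * d * sin (2 * φ) = (a - v * d * cos φ) * sin φ := by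
  rw [sin_two_mul]
  ring

lemma mul_cos_sub_mul_sin_sq_div_add_cos_sq_div (a v x y φ : ℝ) :
    a * cos φ - v * (sin φ ^ 2 / x + cos φ ^ 2 / y)
      = (a - v * (1 / y - 1 / x) * cos φ) * cos φ - v / x := by
  linear_combination (-v / x) * sin_sq_add_cos_sq φ

lemma sqrt_one_add_div_sq_of_pos {a : ℝ} (b : ℝ) (ha : 0 < a) :
    √(1 + (b / a) ^ 2) = √(a ^ 2 + b ^ 2) / a := by
  rw [show 1 + (b / a) ^ 2 = (a ^ 2 + b ^ 2) / a ^ 2 by field_simp, sqrt_div' _ (sq_nonneg a),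
    sqrt_sq ha.le]

lemma sin_arctan_div_of_pos {a : ℝ} (b : ℝ) (ha : 0 < a) :
    sin (arctan (b / a)) = b / √(a ^ 2 + b ^ 2) := by
  rw [sin_arctan, sqrt_one_add_div_sq_of_pos b ha, div_div_div_cancel_right₀ ha.ne']

lemma cos_arctan_div_of_pos {a : ℝ} (b : ℝ) (ha : 0 < a) :
    cos (arctan (b / a)) = a / √(a ^ 2 + b ^ 2) := by
  rw [cos_arctan, sqrt_one_add_div_sq_of_pos b ha, one_div_div]

lemma one_axis_excitation_sub_eq_sqrt {Xd' Xq V P Q E : ℝ}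
    (hXd' : Xd' ≠ 0) (hXq : 0 < Xq) (hV : V ≠ 0) (hA : 0 < Q + V ^ 2 / Xq)
    (hE : E = (V ^ 4 + Q ^ 2 * Xd' * Xq + Q * V ^ 2 * Xd' + Q * V ^ 2 * Xq
          + P ^ 2 * Xd' * Xq) /
        (V * √(P ^ 2 * Xq ^ 2 + Q ^ 2 * Xq ^ 2 + 2 * Q * V ^ 2 * Xq + V ^ 4))) :
    E * V / Xd' - V ^ 2 * (1 / Xd' - 1 / Xq) * ((Q + V ^ 2 / Xq) / √((Q + V ^ 2 / Xq) ^ 2 + P ^ 2))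
      = √((Q + V ^ 2 / Xq) ^ 2 + P ^ 2) := by
  have hXq' := hXq.ne'
  set W := √((Q + V ^ 2 / Xq) ^ 2 + P ^ 2)
  have hW_pos : 0 < W := sqrt_pos.mpr (by positivity)
  have hXqW_sq : (Xq * W) ^ 2 = (Q * Xq + V ^ 2) ^ 2 + P ^ 2 * Xq ^ 2 := by
    rw [mul_pow, sq_sqrt (by positivity)]
    field_simp
  have hdenom : √(P ^ 2 * Xq ^ 2 + Q ^ 2 * Xq ^ 2 + 2 * Q * V ^ 2 * Xq + V ^ 4) = Xq * W := by
    rw [show P ^ 2 * Xq ^ 2 + Q ^ 2 * Xq ^ 2 + 2 * Q * V ^ 2 * Xq + V ^ 4 = (Xq * W) ^ 2 by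
      rw [hXqW_sq]; ring]
    exact sqrt_sq (by positivity)
  rw [hE, hdenom]
  field_simp
  linear_combination (-Xd') * hXqW_sq

theorem one_axis_equilibrium_general (Xd Xd' Xq V θ P Q : ℝ)
    (hXd' : 0 < Xd') (hXq : 0 < Xq) (hV : 0 < V)
    (hQ : 0 < Q + V ^ 2 / Xq)
    (δ E Vfd : ℝ)
    (hδ : δ = θ + Real.arctan (P / (Q + V ^ 2 / Xq)))
    (hE : E = (V ^ 4 + Q ^ 2 * Xd' * Xq + Q * V ^ 2 * Xd' + Q * V ^ 2 * Xq
          + P ^ 2 * Xd' * Xq) /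
        (V * Real.sqrt (P ^ 2 * Xq ^ 2 + Q ^ 2 * Xq ^ 2 + 2 * Q * V ^ 2 * Xq + V ^ 4)))
    (hVfd : Vfd = (Xd / Xd') * E - (Xd / Xd' - 1) * V * Real.cos (δ - θ)) :
    P = (E * V / Xd') * Real.sin (δ - θ)
        - (V ^ 2 / 2) * (1 / Xd' - 1 / Xq) * Real.sin (2 * (δ - θ)) ∧
      Q = (E * V / Xd') * Real.cos (δ - θ)
        - V ^ 2 * (Real.sin (δ - θ) ^ 2 / Xq + Real.cos (δ - θ) ^ 2 / Xd') ∧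
      0 = -(Xd / Xd') * E + (Xd / Xd' - 1) * V * Real.cos (δ - θ) + Vfd := by
  have hφ : δ - θ = arctan (P / (Q + V ^ 2 / Xq)) := by rw [hδ]; ring
  have hW : √((Q + V ^ 2 / Xq) ^ 2 + P ^ 2) ≠ 0 := (sqrt_pos.mpr (by positivity)).ne'
  have hsin := sin_arctan_div_of_pos P hQ
  have hcos := cos_arctan_div_of_pos P hQ
  have hk := one_axis_excitation_sub_eq_sqrt hXd'.ne' hXq hV.ne' hQ hE
  rw [← hcos, ← hφ] at hk
  refine ⟨?_, ?_, by rw [hVfd]; ring⟩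
  · rw [mul_sin_sub_mul_sin_two_mul, hk, hφ, hsin, mul_div_cancel₀ _ hW]
  · rw [mul_cos_sub_mul_sin_sq_div_add_cos_sq_div, hk, hφ, hcos, mul_div_cancel₀ _ hW]
    ring

/-- Closed-form equilibrium of the one-axis synchronous generator model: the values
`δ* = θ + arctan(P*/(Q* + V²/X_q))`,
`E* = (V⁴ + Q*² X_d' X_q + Q* V² X_d' + Q* V² X_q + P*² X_d' X_q) /
      (V √(P*² X_q² + Q*² X_q² + 2 Q* V² X_q + V⁴))`, and
`V_fd* = (X_d/X_d') E* − (X_d/X_d' − 1) V cos(δ* − θ)`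
satisfy the steady-state output equations (i)-(ii) and the flux-decay equilibrium
equation (iii). -/
theorem one_axis_equilibrium (Xd Xd' Xq V θ P Q : ℝ)
    (hXd : 0 < Xd) (hXd' : 0 < Xd') (hXq : 0 < Xq) (hV : 0 < V)
    (hQ : 0 < Q + V ^ 2 / Xq)
    (δ E Vfd : ℝ)
    (hδ : δ = θ + Real.arctan (P / (Q + V ^ 2 / Xq)))
    (hE : E = (V ^ 4 + Q ^ 2 * Xd' * Xq + Q * V ^ 2 * Xd' + Q * V ^ 2 * Xq
          + P ^ 2 * Xd' * Xq) /
        (V * Real.sqrt (P ^ 2 * Xq ^ 2 + Q ^ 2 * Xq ^ 2 + 2 * Q * V ^ 2 * Xq + V ^ 4)))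
    (hVfd : Vfd = (Xd / Xd') * E - (Xd / Xd' - 1) * V * Real.cos (δ - θ)) :
    P = (E * V / Xd') * Real.sin (δ - θ)
        - (V ^ 2 / 2) * (1 / Xd' - 1 / Xq) * Real.sin (2 * (δ - θ)) ∧
      Q = (E * V / Xd') * Real.cos (δ - θ)
        - V ^ 2 * (Real.sin (δ - θ) ^ 2 / Xq + Real.cos (δ - θ) ^ 2 / Xd') ∧
      0 = -(Xd / Xd') * E + (Xd / Xd' - 1) * V * Real.cos (δ - θ) + Vfd :=
  one_axis_equilibrium_general Xd Xd' Xq V θ P Q hXd' hXq hV hQ δ E Vfd hδ hE hVfd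
end

section
/- Let X_d' > 0, X_q > 0, V > 0, θ ∈ ℝ, and real P*, Q* with Q* + V²/X_q > 0. Suppose (δ, E) ∈ ℝ² satisfies δ − θ ∈ (−π/2, π/2) together with P* = (E·V/X_d')·sin(δ − θ) − (V²/2)·(1/X_d' − 1/X_q)·sin(2(δ − θ)) and Q* = (E·V/X_d')·cos(δ − θ) − V²·(sin²(δ − θ)/X_q + cos²(δ − θ)/X_d'). Then δ = θ + arctan(P*/(Q* + V²/X_q)) and E = (V⁴ + Q*²·X_d'·X_q + Q*·V²·X_d' + Q*·V²·X_q + P*²·X_d'·X_q) / (V·√(P*²·X_q² + Q*²·X_q² + 2·Q*·V²·X_q + V⁴)); in particular the steady state of the one-axis generator model compatible with the given power-flow solution is unique in this range. -/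
open Real

/-!
With `α = δ - θ` and `R = E V / X_d' - V² cos α (1/X_d' - 1/X_q)`, the two output equations say
exactly that `P* = R sin α` and `Q* + V²/X_q = R cos α`. Since `cos α > 0` and `Q* + V²/X_q > 0`,
`R > 0`, so `(R, α)` are the polar coordinates of the point `(Q* + V²/X_q, P*)`: `α` is the arctangent
of `P* / (Q* + V²/X_q)` and `R` its Euclidean norm, from which `E` is recovered linearly.
-/

theorem Real.eq_arctan_div_of_polar {a b r α : ℝ} (hα : α ∈ Set.Ioo (-(π / 2)) (π / 2))
    (hr : r ≠ 0) (ha : a = r * sin α) (hb : b = r * cos α) : α = arctan (a / b) := by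
  rw [ha, hb, mul_div_mul_left _ _ hr, ← tan_eq_sin_div_cos, arctan_tan hα.1 hα.2]

theorem Real.sqrt_sq_add_sq_of_polar {a b r α : ℝ} (hr : 0 ≤ r)
    (ha : a = r * sin α) (hb : b = r * cos α) : √(a ^ 2 + b ^ 2) = r := by
  rw [show a ^ 2 + b ^ 2 = r ^ 2 by rw [ha, hb]; linear_combination r ^ 2 * sin_sq_add_cos_sq α,
    sqrt_sq hr]

namespace OneAxis

theorem powers_eq_polar {Xd' Xq V E α P Q : ℝ}
    (hP : P = (E * V / Xd') * sin α - (V ^ 2 / 2) * (1 / Xd' - 1 / Xq) * sin (2 * α))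
    (hQ : Q = (E * V / Xd') * cos α - V ^ 2 * (sin α ^ 2 / Xq + cos α ^ 2 / Xd')) :
    P = (E * V / Xd' - V ^ 2 * cos α * (1 / Xd' - 1 / Xq)) * sin α ∧
      Q + V ^ 2 / Xq = (E * V / Xd' - V ^ 2 * cos α * (1 / Xd' - 1 / Xq)) * cos α := by
  constructor
  · rw [hP, sin_two_mul]; ring
  · rw [hQ]; linear_combination -(V ^ 2 / Xq) * sin_sq_add_cos_sq α

theorem field_voltage_eq {Xd' Xq V E P Q R c : ℝ} (hXd' : Xd' ≠ 0) (hXq : 0 < Xq) (hV : V ≠ 0)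
    (hR : 0 < R) (hRdef : R = E * V / Xd' - V ^ 2 * c * (1 / Xd' - 1 / Xq))
    (hc : Q + V ^ 2 / Xq = R * c) (hnorm : √(P ^ 2 + (Q + V ^ 2 / Xq) ^ 2) = R) :
    E = (V ^ 4 + Q ^ 2 * Xd' * Xq + Q * V ^ 2 * Xd' + Q * V ^ 2 * Xq + P ^ 2 * Xd' * Xq) /
      (V * √(P ^ 2 * Xq ^ 2 + Q ^ 2 * Xq ^ 2 + 2 * Q * V ^ 2 * Xq + V ^ 4)) := by
  have hsq : R ^ 2 = P ^ 2 + (Q + V ^ 2 / Xq) ^ 2 := by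
    rw [← hnorm, sq_sqrt (by positivity)]
  have hsqrt : √(P ^ 2 * Xq ^ 2 + Q ^ 2 * Xq ^ 2 + 2 * Q * V ^ 2 * Xq + V ^ 4) = Xq * R := by
    rw [← sqrt_sq (by positivity : 0 ≤ Xq * R), mul_pow, hsq]
    congr 1
    field_simp
    ring
  rw [hsqrt, eq_div_iff (by positivity)]
  field_simp at hRdef hc hsq
  refine mul_right_cancel₀ hXq.ne' ?_
  linear_combination Xd' * hsq - R * Xq * hRdef - V ^ 2 * (Xq - Xd') * hc

end OneAxis

/-- Uniqueness of the one-axis generator steady state: if `(δ, E)` with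
`δ − θ ∈ (−π/2, π/2)` satisfies the steady-state output equations for the given
power-flow solution `(V∠θ, P*, Q*)` with `Q* + V²/X_q > 0`, then `δ` and `E` are given
by the closed-form expressions of the paper. -/
theorem one_axis_equilibrium_unique (Xd' Xq V θ P Q : ℝ)
    (hXd' : 0 < Xd') (hXq : 0 < Xq) (hV : 0 < V)
    (hQ : 0 < Q + V ^ 2 / Xq)
    (δ E : ℝ)
    (hrange : δ - θ ∈ Set.Ioo (-(Real.pi / 2)) (Real.pi / 2))
    (hP : P = (E * V / Xd') * Real.sin (δ - θ)
        - (V ^ 2 / 2) * (1 / Xd' - 1 / Xq) * Real.sin (2 * (δ - θ)))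
    (hQeq : Q = (E * V / Xd') * Real.cos (δ - θ)
        - V ^ 2 * (Real.sin (δ - θ) ^ 2 / Xq + Real.cos (δ - θ) ^ 2 / Xd')) :
    δ = θ + Real.arctan (P / (Q + V ^ 2 / Xq)) ∧
      E = (V ^ 4 + Q ^ 2 * Xd' * Xq + Q * V ^ 2 * Xd' + Q * V ^ 2 * Xq
          + P ^ 2 * Xd' * Xq) /
        (V * Real.sqrt (P ^ 2 * Xq ^ 2 + Q ^ 2 * Xq ^ 2 + 2 * Q * V ^ 2 * Xq + V ^ 4)) := by
  set R := E * V / Xd' - V ^ 2 * cos (δ - θ) * (1 / Xd' - 1 / Xq)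
  obtain ⟨hPR, hQR⟩ := OneAxis.powers_eq_polar hP hQeq
  have hR : 0 < R := pos_of_mul_pos_left (hQR ▸ hQ) (cos_pos_of_mem_Ioo hrange).le
  refine ⟨?_, OneAxis.field_voltage_eq hXd'.ne' hXq hV.ne' hR rfl hQR
    (sqrt_sq_add_sq_of_polar hR.le hPR hQR)⟩
  rw [← eq_arctan_div_of_polar hrange hR.ne' hPR hQR]
  ring
end

section
/- Let L > 0, R ≥ 0, ω̄ > 0, τ > 0 be real constants, let i_ref : ℝ → ℝ be any function, and suppose i, χ : ℝ → ℝ are differentiable and satisfy, for all t, (L/ω̄)·i'(t) = −R·(i(t) − χ(t)) + (L/(ω̄·τ))·(i_ref(t) − i(t)) and τ·χ'(t) = i_ref(t) − i(t), with χ(0) = i(0). Then χ(t) = i(t) for all t, and consequently τ·i'(t) + i(t) = i_ref(t) for all t. -/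
/-!
The integrator state `χ` tracks the current exactly: subtracting `(L/ω̄)·τ⁻¹` times the second
equation from the first, the controller's reference terms cancel and the tracking error
`e = i − χ` obeys the autonomous linear ODE `e' = −(ω̄R/L)·e`. With `e(0) = 0`, uniqueness of
solutions forces `e ≡ 0`, and then the first equation reduces to `τ i' + i = i_ref`.
-/

open Set

theorem eq_zero_of_hasDerivAt_smul_self {E : Type*} [NormedAddCommGroup E] [NormedSpace ℝ E]
    {f : ℝ → E} {c t₀ : ℝ} (hf : ∀ t, HasDerivAt f (c • f t) t) (h₀ : f t₀ = 0) : f = 0 :=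
  ODE_solution_unique_univ (v := fun _ x => c • x) (s := fun _ => univ)
    (fun _ => (lipschitzWith_smul c).lipschitzOnWith) (fun t => ⟨hf t, trivial⟩)
    (fun t => ⟨by rw [Pi.zero_apply, smul_zero]; exact hasDerivAt_const t 0, trivial⟩) h₀

section InnerLoop

variable {L R ω τ : ℝ} {iref i χ : ℝ → ℝ}

theorem hasDerivAt_tracking_error (hL : L ≠ 0) (hω : ω ≠ 0) (hτ : τ ≠ 0)
    (hi : Differentiable ℝ i) (hχ : Differentiable ℝ χ)
    (heq1 : ∀ t, (L / ω) * deriv i t = -R * (i t - χ t) + (L / (ω * τ)) * (iref t - i t))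
    (heq2 : ∀ t, τ * deriv χ t = iref t - i t) (t : ℝ) :
    HasDerivAt (fun t => i t - χ t) (-(ω * R / L) • (i t - χ t)) t := by
  have hrate : deriv i t - deriv χ t = -(ω * R / L) * (i t - χ t) := by
    have hdi : deriv i t = ω / L * (L / ω * deriv i t) := by field_simp
    have hdχ : deriv χ t = (τ * deriv χ t) / τ := by field_simp
    rw [hdi, hdχ, heq1, heq2]
    field_simp
    ring
  rw [smul_eq_mul, ← hrate]
  exact (hi t).hasDerivAt.sub (hχ t).hasDerivAt

theorem first_order_lag_of_eq (hL : L ≠ 0) (hω : ω ≠ 0) (hτ : τ ≠ 0) {t : ℝ}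
    (heq1 : (L / ω) * deriv i t = -R * (i t - χ t) + (L / (ω * τ)) * (iref t - i t))
    (hχi : χ t = i t) :
    τ * deriv i t + i t = iref t := by
  rw [hχi, sub_self, mul_zero, zero_add] at heq1
  field_simp at heq1
  linarith

end InnerLoop

theorem gsc_inner_loop_first_order_lag_general (L R ω τ : ℝ)
    (hL : 0 < L) (hω : 0 < ω) (hτ : 0 < τ)
    (iref : ℝ → ℝ) (i χ : ℝ → ℝ)
    (hi : Differentiable ℝ i) (hχ : Differentiable ℝ χ)
    (heq1 : ∀ t, (L / ω) * deriv i t = -R * (i t - χ t) + (L / (ω * τ)) * (iref t - i t))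
    (heq2 : ∀ t, τ * deriv χ t = iref t - i t)
    (h0 : χ 0 = i 0) :
    ∀ t, χ t = i t ∧ τ * deriv i t + i t = iref t := by
  have herror : (fun t => i t - χ t) = 0 :=
    eq_zero_of_hasDerivAt_smul_self
      (hasDerivAt_tracking_error hL.ne' hω.ne' hτ.ne' hi hχ heq1 heq2)
      (sub_eq_zero.2 h0.symm)
  intro t
  have hχi : χ t = i t := (sub_eq_zero.1 (congrFun herror t)).symm
  exact ⟨hχi, first_order_lag_of_eq hL.ne' hω.ne' hτ.ne' (heq1 t) hχi⟩

/-- The inner-loop GSC current controller makes the closed-loop current dynamics a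
first-order lag: if `(L/ω̄) i' = −R (i − χ) + (L/(ω̄ τ))(i_ref − i)` and
`τ χ' = i_ref − i` with `χ(0) = i(0)`, then `χ ≡ i` and `τ i' + i = i_ref`. -/
theorem gsc_inner_loop_first_order_lag (L R ω τ : ℝ)
    (hL : 0 < L) (hR : 0 ≤ R) (hω : 0 < ω) (hτ : 0 < τ)
    (iref : ℝ → ℝ) (i χ : ℝ → ℝ)
    (hi : Differentiable ℝ i) (hχ : Differentiable ℝ χ)
    (heq1 : ∀ t, (L / ω) * deriv i t = -R * (i t - χ t) + (L / (ω * τ)) * (iref t - i t))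
    (heq2 : ∀ t, τ * deriv χ t = iref t - i t)
    (h0 : χ 0 = i 0) :
    ∀ t, χ t = i t ∧ τ * deriv i t + i t = iref t :=
  gsc_inner_loop_first_order_lag_general L R ω τ hL hω hτ iref i χ hi hχ heq1 heq2 h0
end
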